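/- As ℏ → 0, the rescaled Moyal-type kernel (2π/ℏ) sin(πℏ(x·y'−y·x')) converges pointwise to 2π²(x·y'−y·x'); consequently the ℏ → 0 limit of the p-mechanical bracket formula yields the Poisson bracket: the Fourier transform of ⟦k',k⟧ at ℏ=0 equals ∂_q k̂' ∂_p k̂ − ∂_p k̂' ∂_q k̂ (up to the paper's normalization). -/

import Mathlib

/-!
The kernel limit is the derivative of `sin` at `0`. For the bracket, the symplectic form
`ω(x, w) = x·w₂ − y·w₁` satisfies `ω(x, w) = ω(x − w, w)`, so after the shear
`(x, w) ↦ (w, x − w)` the Fourier transform of the `ℏ = 0` bracket splits into a sum of products of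
Fourier transforms of first moments of the marginals `∫ k(s, ·) ds`. These are the same as the
Fourier transforms of the first moments of `k` in `(x, y)`, i.e. the partial derivatives of `k̂`
divided by `−2πi`.
-/

noncomputable section

open Real MeasureTheory Topology Filter

abbrev Hpt (n : ℕ) : Type := ℝ × (Fin n → ℝ) × (Fin n → ℝ)

/-- Phase space `ℝ²ⁿ` with coordinates `(q,p)`. -/
abbrev PS (n : ℕ) : Type := (Fin n → ℝ) × (Fin n → ℝ)

def dot {n : ℕ} (x y : Fin n → ℝ) : ℝ := ∑ i, x i * y i

/-- Partial Fourier transform `s → ℏ`. -/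
def pFT {n : ℕ} (k : Hpt n → ℂ) (h : ℝ) (x y : Fin n → ℝ) : ℂ :=
  ∫ s : ℝ, k (s, x, y) * Complex.exp (-2 * (π : ℂ) * Complex.I * ((h * s : ℝ) : ℂ))

/-- The `ℏ = 0` value of the `p`-mechanical bracket `⟦k',k⟧ˆ_s`, obtained by
replacing the kernel `(2π/ℏ) sin(πℏ(x·y'−y·x'))` by its pointwise limit
`2π²(x·y'−y·x')` as `ℏ → 0`. -/
def bracketZero {n : ℕ} (k' k : Hpt n → ℂ) (x y : Fin n → ℝ) : ℂ :=
  ∫ w : PS n,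
    ((2 * π ^ 2 * (dot x w.2 - dot y w.1) : ℝ) : ℂ) *
      pFT k' 0 w.1 w.2 * pFT k 0 (x - w.1) (y - w.2)

/-- The full Fourier transform of `k` in `(x,y)` (at `ℏ = 0`), evaluated at `(q,p)`. -/
def Khat {n : ℕ} (k : Hpt n → ℂ) (qp : PS n) : ℂ :=
  ∫ g : Hpt n,
    k g * Complex.exp (-2 * (π : ℂ) * Complex.I *
      ((dot qp.1 g.2.1 + dot qp.2 g.2.2 : ℝ) : ℂ))

def Dq {n : ℕ} (j : Fin n) (F : PS n → ℂ) (qp : PS n) : ℂ :=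
  fderiv ℝ F qp (Pi.single j 1, 0)

def Dp {n : ℕ} (j : Fin n) (F : PS n → ℂ) (qp : PS n) : ℂ :=
  fderiv ℝ F qp (0, Pi.single j 1)

open Complex (I)

theorem tendsto_div_mul_sin (c b : ℝ) :
    Tendsto (fun h : ℝ => c / h * Real.sin (b * h)) (𝓝[≠] 0) (𝓝 (c * b)) := by
  have hderiv : HasDerivAt (fun h : ℝ => Real.sin (b * h)) b 0 := by
    simpa using ((hasDerivAt_id (0 : ℝ)).const_mul b).sin
  refine ((hasDerivAt_iff_tendsto_slope.mp hderiv).const_mul c).congr fun h => ?_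
  simp only [slope_def_field, sub_zero, mul_zero, Real.sin_zero]
  ring

section Marginal

variable {α β 𝕜 : Type*} [RCLike 𝕜] [MeasurableSpace α] [MeasurableSpace β]
  {μ : Measure α} {ν : Measure β} [SFinite μ] [SFinite ν] {f : α × β → 𝕜} {φ : β → 𝕜}

theorem MeasureTheory.Integrable.integral_mul_prod_right (h : Integrable (fun z => f z * φ z.2) (μ.prod ν)) :
    Integrable (fun y => (∫ x, f (x, y) ∂μ) * φ y) ν := by
  simpa only [integral_mul_const] using h.integral_prod_right

theorem integral_integral_mul_eq_integral_prod
    (h : Integrable (fun z => f z * φ z.2) (μ.prod ν)) :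
    ∫ y, (∫ x, f (x, y) ∂μ) * φ y ∂ν = ∫ z, f z * φ z.2 ∂(μ.prod ν) := by
  simp_rw [← integral_mul_const]
  exact (integral_prod_symm _ h).symm

end Marginal

theorem integral_integral_comp_sub {G E : Type*} [AddGroup G] [MeasurableSpace G]
    [MeasurableAdd₂ G] [MeasurableNeg G] [NormedAddCommGroup E] [NormedSpace ℝ E]
    {μ : Measure G} [SFinite μ] [μ.IsAddRightInvariant] {F : G × G → E}
    (hF : Integrable F (μ.prod μ)) :
    ∫ x, ∫ w, F (w, x - w) ∂μ ∂μ = ∫ p, F p ∂(μ.prod μ) := by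
  have hshear := measurePreserving_prod_sub_swap μ μ
  calc ∫ x, ∫ w, F (w, x - w) ∂μ ∂μ = ∫ z, F (z.2, z.1 - z.2) ∂(μ.prod μ) :=
        integral_integral (f := fun x w => F (w, x - w))
          (hshear.integrable_comp_of_integrable hF)
    _ = ∫ p, F p ∂((μ.prod μ).map fun z => (z.2, z.1 - z.2)) :=
        (integral_map hshear.measurable.aemeasurable
          (by rw [hshear.map_eq]; exact hF.aestronglyMeasurable)).symm
    _ = ∫ p, F p ∂(μ.prod μ) := by rw [hshear.map_eq]

theorem fderiv_integral_mul_cexp_apply {V W : Type*} [NormedAddCommGroup V] [NormedSpace ℝ V]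
    [MeasurableSpace V] [BorelSpace V] [SecondCountableTopology V] [NormedAddCommGroup W]
    [NormedSpace ℝ W] {μ : Measure V} (L : V →L[ℝ] W →L[ℝ] ℝ) {f : V → ℂ}
    (hf : Integrable f μ) (hf' : Integrable (fun v => ‖v‖ * ‖f v‖) μ) (w d : W) :
    fderiv ℝ (fun w => ∫ v, f v * Complex.exp (-2 * π * I * (L v w : ℂ)) ∂μ) w d =
      -(2 * π * I) * ∫ v, f v * ((L v d : ℂ) * Complex.exp (-2 * π * I * (L v w : ℂ))) ∂μ := by
  have hfourier : (fun w => ∫ v, f v * Complex.exp (-2 * π * I * (L v w : ℂ)) ∂μ) =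
      VectorFourier.fourierIntegral Real.fourierChar μ L.toLinearMap₁₂ f := by
    ext w
    refine integral_congr_ae (ae_of_all _ fun v => ?_)
    simp only [Circle.smul_def, Real.fourierChar_apply, smul_eq_mul,
      ContinuousLinearMap.toLinearMap₁₂_apply_apply_apply]
    push_cast
    ring_nf
  have hsmul : Integrable (VectorFourier.fourierSMulRight L f) μ :=
    (hf'.const_mul (2 * π * ‖L‖)).mono' hf.1.fourierSMulRight
      (ae_of_all _ fun v => (VectorFourier.norm_fourierSMulRight_le L f v).trans_eq (by ring))
  have hcont : Continuous fun p : V × W => L.toLinearMap₁₂ p.1 p.2 := L.continuous₂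
  have hint := (VectorFourier.fourierIntegral_convergent_iff Real.continuous_fourierChar
    hcont (μ := μ) w).2 hsmul
  rw [hfourier, VectorFourier.fderiv_fourierIntegral L hf hf', VectorFourier.fourierIntegral,
    ContinuousLinearMap.integral_apply hint, ← integral_const_mul]
  refine integral_congr_ae (ae_of_all _ fun v => ?_)
  simp only [smul_apply, VectorFourier.fourierSMulRight_apply,
    Circle.smul_def, Real.fourierChar_apply, smul_eq_mul, Complex.real_smul,
    ContinuousLinearMap.toLinearMap₁₂_apply_apply_apply]
  push_cast
  ring_nf

-- Instance search does not see through the defeq `volume = volume.prod volume`.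
instance (n : ℕ) : (volume : Measure (PS n)).IsAddHaarMeasure :=
  Measure.prod.instIsAddHaarMeasure _ _

instance (n : ℕ) : (volume : Measure (Hpt n)).IsAddHaarMeasure :=
  Measure.prod.instIsAddHaarMeasure _ _

namespace PhaseSpace

variable {n : ℕ}

theorem dot_eq_dotProduct (x y : Fin n → ℝ) : dot x y = x ⬝ᵥ y := rfl

def pairing : PS n →L[ℝ] PS n →L[ℝ] ℝ :=
  LinearMap.toContinuousLinearMap
    (LinearMap.toContinuousLinearMap.toLinearMap ∘ₗ
      LinearMap.mk₂ ℝ (fun u qp : PS n => dot qp.1 u.1 + dot qp.2 u.2)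
        (fun u u' qp => by
          simp only [dot_eq_dotProduct, Prod.fst_add, Prod.snd_add, dotProduct_add]; ring)
        (fun c u qp => by
          simp only [dot_eq_dotProduct, Prod.smul_fst, Prod.smul_snd, dotProduct_smul,
            smul_eq_mul]; ring)
        (fun u qp qp' => by
          simp only [dot_eq_dotProduct, Prod.fst_add, Prod.snd_add, add_dotProduct]; ring)
        (fun c u qp => by
          simp only [dot_eq_dotProduct, Prod.smul_fst, Prod.smul_snd, smul_dotProduct,
            smul_eq_mul]; ring))

theorem pairing_apply (u qp : PS n) : pairing u qp = dot qp.1 u.1 + dot qp.2 u.2 := by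
  simp [pairing]

theorem pairing_single_zero (u : PS n) (j : Fin n) : pairing u (Pi.single j 1, 0) = u.1 j := by
  simp [pairing_apply, dot_eq_dotProduct]

theorem pairing_zero_single (u : PS n) (j : Fin n) : pairing u (0, Pi.single j 1) = u.2 j := by
  simp [pairing_apply, dot_eq_dotProduct]

def symplecticForm (u w : PS n) : ℝ := dot u.1 w.2 - dot u.2 w.1

theorem symplecticForm_sub_left (u w : PS n) :
    symplecticForm (u - w) w = symplecticForm u w := by
  simp only [symplecticForm, dot_eq_dotProduct, Prod.fst_sub, Prod.snd_sub, sub_dotProduct,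
    dotProduct_comm w.2 w.1]
  ring

theorem symplecticForm_eq_sum (u w : PS n) :
    symplecticForm u w = ∑ j, (pairing u (Pi.single j 1, 0) * pairing w (0, Pi.single j 1) -
      pairing u (0, Pi.single j 1) * pairing w (Pi.single j 1, 0)) := by
  simp only [pairing_single_zero, pairing_zero_single, symplecticForm, dot,
    Finset.sum_sub_distrib]

def phase (qp u : PS n) : ℂ := Complex.exp (-2 * π * I * (pairing u qp : ℂ))

theorem phase_add (qp u w : PS n) : phase qp (u + w) = phase qp u * phase qp w := by
  simp only [phase, map_add, add_apply, Complex.ofReal_add, ← Complex.exp_add]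
  ring_nf

theorem norm_phase (qp u : PS n) : ‖phase qp u‖ = 1 := by
  simp [phase, Complex.norm_exp]

@[fun_prop]
theorem continuous_phase (qp : PS n) : Continuous (phase qp) := by
  unfold phase
  fun_prop

theorem Khat_eq (k : Hpt n → ℂ) : Khat k = fun qp => ∫ g, k g * Complex.exp (-2 * π * I *
    ((pairing.comp (ContinuousLinearMap.snd ℝ ℝ (PS n)) g qp : ℝ) : ℂ)) := by
  simp only [ContinuousLinearMap.comp_apply, ContinuousLinearMap.coe_snd', pairing_apply]
  rfl

def fourierMoment (k : Hpt n → ℂ) (qp d : PS n) : ℂ :=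
  ∫ g, k g * ((pairing g.2 d : ℂ) * phase qp g.2)

theorem fderiv_Khat_apply (k : SchwartzMap (Hpt n) ℂ) (qp d : PS n) :
    fderiv ℝ (Khat k) qp d = -(2 * π * I) * fourierMoment k qp d := by
  rw [Khat_eq, fderiv_integral_mul_cexp_apply _ k.integrable
    (by simpa using k.integrable_pow_mul volume 1)]
  rfl

theorem integrable_mul_pairing_mul_phase (k : SchwartzMap (Hpt n) ℂ) (qp d : PS n) :
    Integrable fun g : Hpt n => k g * ((pairing g.2 d : ℂ) * phase qp g.2) := by
  refine ((k.integrable_pow_mul volume 1).const_mul (‖pairing (n := n)‖ * ‖d‖)).mono'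
    (Continuous.aestronglyMeasurable (by fun_prop)) (ae_of_all _ fun g => ?_)
  have hpair : ‖pairing g.2 d‖ ≤ ‖pairing (n := n)‖ * ‖g‖ * ‖d‖ :=
    (pairing.le_opNorm₂ g.2 d).trans (by gcongr; exact norm_snd_le g)
  rw [norm_mul, norm_mul, norm_phase, mul_one, Complex.norm_real, pow_one]
  calc ‖k g‖ * ‖pairing g.2 d‖ ≤ ‖k g‖ * (‖pairing (n := n)‖ * ‖g‖ * ‖d‖) := by gcongr
    _ = ‖pairing (n := n)‖ * ‖d‖ * (‖g‖ * ‖k g‖) := by ring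

theorem integral_integral_mul_pairing_mul_phase (k : SchwartzMap (Hpt n) ℂ) (qp d : PS n) :
    ∫ u : PS n, (∫ s, k (s, u)) * ((pairing u d : ℂ) * phase qp u) = fourierMoment k qp d :=
  integral_integral_mul_eq_integral_prod (integrable_mul_pairing_mul_phase k qp d)

theorem integral_twistedConvolution_mul_phase {f g : PS n → ℂ} (qp : PS n)
    (hf : ∀ d, Integrable fun u => f u * ((pairing u d : ℂ) * phase qp u))
    (hg : ∀ d, Integrable fun u => g u * ((pairing u d : ℂ) * phase qp u)) :
    ∫ x, (∫ w, ((2 * π ^ 2 * symplecticForm x w : ℝ) : ℂ) * f w * g (x - w)) * phase qp x =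
      ((2 * π ^ 2 : ℝ) : ℂ) * ∑ j,
        ((∫ u, f u * ((pairing u (0, Pi.single j 1) : ℂ) * phase qp u)) *
            (∫ u, g u * ((pairing u (Pi.single j 1, 0) : ℂ) * phase qp u)) -
          (∫ u, f u * ((pairing u (Pi.single j 1, 0) : ℂ) * phase qp u)) *
            (∫ u, g u * ((pairing u (0, Pi.single j 1) : ℂ) * phase qp u))) := by
  set mf := fun (d : PS n) u => f u * ((pairing u d : ℂ) * phase qp u)
  set mg := fun (d : PS n) u => g u * ((pairing u d : ℂ) * phase qp u)
  set H : PS n × PS n → ℂ := fun p => ((2 * π ^ 2 : ℝ) : ℂ) * ∑ j,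
    (mf (0, Pi.single j 1) p.1 * mg (Pi.single j 1, 0) p.2 -
      mf (Pi.single j 1, 0) p.1 * mg (0, Pi.single j 1) p.2)
  have hterm (j : Fin n) : Integrable (fun p : PS n × PS n =>
      mf (0, Pi.single j 1) p.1 * mg (Pi.single j 1, 0) p.2 -
        mf (Pi.single j 1, 0) p.1 * mg (0, Pi.single j 1) p.2) (volume.prod volume) :=
    ((hf _).mul_prod (hg _)).sub ((hf _).mul_prod (hg _))
  have hH : Integrable H (volume.prod volume) :=
    (integrable_finsetSum _ fun j _ => hterm j).const_mul _
  have hshear (x w : PS n) :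
      ((2 * π ^ 2 * symplecticForm x w : ℝ) : ℂ) * f w * g (x - w) * phase qp x = H (w, x - w) := by
    have hphase : phase qp x = phase qp w * phase qp (x - w) := by
      rw [← phase_add, add_sub_cancel]
    rw [← symplecticForm_sub_left, symplecticForm_eq_sum, hphase]
    simp only [H, mf, mg, Finset.mul_sum]
    push_cast
    simp only [Finset.sum_mul]
    refine Finset.sum_congr rfl fun j _ => ?_
    ring
  calc _ = ∫ x, ∫ w, H (w, x - w) := by simp_rw [← integral_mul_const, hshear]
    _ = ∫ p, H p ∂(volume.prod volume) := integral_integral_comp_sub hH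
    _ = _ := by
      rw [integral_const_mul, integral_finsetSum _ fun j _ => hterm j]
      refine congrArg _ (Finset.sum_congr rfl fun j _ => ?_)
      rw [integral_sub ((hf _).mul_prod (hg _)) ((hf _).mul_prod (hg _))]
      exact congrArg₂ _ (integral_prod_mul (mf _) (mg _)) (integral_prod_mul (mf _) (mg _))

theorem integral_bracketZero_mul_phase (k' k : SchwartzMap (Hpt n) ℂ) (qp : PS n) :
    ∫ xy, bracketZero k' k xy.1 xy.2 * phase qp xy =
      ((2 * π ^ 2 : ℝ) : ℂ) * ∑ j,
        (fourierMoment k' qp (0, Pi.single j 1) * fourierMoment k qp (Pi.single j 1, 0) -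
          fourierMoment k' qp (Pi.single j 1, 0) * fourierMoment k qp (0, Pi.single j 1)) := by
  have hbracket (xy : PS n) : bracketZero k' k xy.1 xy.2 = ∫ w,
      ((2 * π ^ 2 * symplecticForm xy w : ℝ) : ℂ) * (∫ s, k' (s, w)) * ∫ s, k (s, xy - w) := by
    simp only [bracketZero, pFT, Complex.ofReal_zero, zero_mul, mul_zero, Complex.exp_zero,
      mul_one]
    rfl
  simp only [hbracket]
  rw [integral_twistedConvolution_mul_phase qp
    (fun d => (integrable_mul_pairing_mul_phase k' qp d).integral_mul_prod_right)
    (fun d => (integrable_mul_pairing_mul_phase k qp d).integral_mul_prod_right)]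
  simp only [integral_integral_mul_pairing_mul_phase]

end PhaseSpace

/-- As `ℏ → 0` the rescaled Moyal kernel `(2π/ℏ) sin(πℏ a)` converges to
`2π² a`, and consequently the `ℏ = 0` limit of the `p`-mechanical bracket
yields (up to the paper's normalisation, here the constant `1/2`) the Poisson
bracket `∂_q k̂' ∂_p k̂ − ∂_p k̂' ∂_q k̂` of the Fourier transforms. -/
theorem bracket_limit_is_poisson (n : ℕ) (k' k : SchwartzMap (Hpt n) ℂ) :
    (∀ a : ℝ,
      Tendsto (fun h : ℝ => (2 * π / h) * Real.sin (π * h * a))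
        (𝓝[≠] 0) (𝓝 (2 * π ^ 2 * a))) ∧
    (∀ qp : PS n,
      (∫ xy : PS n, bracketZero ⇑k' ⇑k xy.1 xy.2 *
          Complex.exp (-2 * (π : ℂ) * Complex.I *
            ((dot qp.1 xy.1 + dot qp.2 xy.2 : ℝ) : ℂ)))
        = (1 / 2 : ℂ) * ∑ j : Fin n,
            (Dq j (Khat ⇑k') qp * Dp j (Khat ⇑k) qp
              - Dp j (Khat ⇑k') qp * Dq j (Khat ⇑k) qp)) := by
  refine ⟨fun a => ?_, fun qp => ?_⟩
  · convert tendsto_div_mul_sin (2 * π) (π * a) using 2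
    · rw [mul_right_comm]
    · ring
  · have hbracket := PhaseSpace.integral_bracketZero_mul_phase k' k qp
    simp only [PhaseSpace.phase, PhaseSpace.pairing_apply] at hbracket
    simp only [hbracket, Dq, Dp, PhaseSpace.fderiv_Khat_apply, Finset.mul_sum]
    refine Finset.sum_congr rfl fun j _ => ?_
    push_cast
    ring_nf
    rw [Complex.I_sq]
    ring
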